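/- arXiv:math/0504576 — 4 statements merged into one kernel-verified Lean document; each statement's English description precedes it below -/
import Mathlib

section
/- Let $r$ and $s$ be integers with $r \geq 3$ and $s \geq r-1$, and write $s-1 = w(r-2) + v$ with integers $w, v$ satisfying $0 \leq v \leq r-3$. Then for every integer $N \geq w$ one has $\sum_{i=1}^{N} (i-1)\big(s - \min\{s,\, i(r-2)+1\}\big) = \binom{w}{3}(r-2) + \binom{w}{2}v$. -/
/-! For `i ≤ w` the term `s - min s (i*(r-2)+1)` equals `(w-i)*(r-2) + v`, and for `i > w` it
vanishes because `v ≤ r-3`. The sum is therefore `∑_{i=1}^{w} (i-1)*((w-i)*(r-2) + v)`, which is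
`(r-2)*∑ (i-1)(w-i) + v*∑ (i-1) = C(w,3)*(r-2) + C(w,2)*v`. -/

open Finset

lemma sum_Icc_one_add_one (f : ℤ → ℚ) {n : ℤ} (hn : 0 ≤ n) :
    ∑ i ∈ Icc 1 (n + 1), f i = ∑ i ∈ Icc 1 n, f i + f (n + 1) := by
  rw [← insert_Icc_right_eq_Icc_add_one (by omega), sum_insert (by simp), add_comm]

lemma sum_Icc_one_sub_one {n : ℤ} (hn : 0 ≤ n) :
    ∑ i ∈ Icc 1 n, ((i : ℚ) - 1) = n * (n - 1) / 2 := by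
  induction n, hn using Int.leInduction with
  | base => simp
  | succ n hn ih =>
    rw [sum_Icc_one_add_one _ hn, ih]
    push_cast
    ring

lemma sum_Icc_one_sub_one_mul_self {n : ℤ} (hn : 0 ≤ n) :
    ∑ i ∈ Icc 1 n, ((i : ℚ) - 1) * i = (n - 1) * n * (n + 1) / 3 := by
  induction n, hn using Int.leInduction with
  | base => simp
  | succ n hn ih =>
    rw [sum_Icc_one_add_one _ hn, ih]
    push_cast
    ring

lemma sum_Icc_one_sub_one_mul_sub_mul_add {w : ℤ} (hw : 0 ≤ w) (d v : ℚ) :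
    ∑ i ∈ Icc 1 w, ((i : ℚ) - 1) * ((w - i) * d + v)
      = w * (w - 1) * (w - 2) / 6 * d + w * (w - 1) / 2 * v := by
  have hsplit : ∀ i ∈ Icc 1 w, ((i : ℚ) - 1) * ((w - i) * d + v)
      = ((i : ℚ) - 1) * (w * d + v) - ((i : ℚ) - 1) * i * d := fun _ _ => by ring
  rw [sum_congr rfl hsplit, sum_sub_distrib, ← sum_mul, ← sum_mul,
    sum_Icc_one_sub_one hw, sum_Icc_one_sub_one_mul_self hw]
  ring

section Division

variable {s d w v i : ℤ}

lemma min_eq_right_of_le_quotient (hdiv : s - 1 = w * d + v) (hv : 0 ≤ v) (hd : 0 ≤ d)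
    (hi : i ≤ w) : min s (i * d + 1) = i * d + 1 :=
  min_eq_right (by nlinarith)

lemma min_eq_left_of_quotient_lt (hdiv : s - 1 = w * d + v) (hv : 0 ≤ v) (hvd : v < d)
    (hi : w < i) : min s (i * d + 1) = s :=
  min_eq_left (by nlinarith)

lemma sum_Icc_mul_sub_min_eq {N : ℤ} (hdiv : s - 1 = w * d + v) (hv : 0 ≤ v) (hvd : v < d)
    (hN : w ≤ N) :
    ∑ i ∈ Icc 1 N, (i - 1) * (s - min s (i * d + 1))
      = ∑ i ∈ Icc 1 w, (i - 1) * ((w - i) * d + v) := by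
  rw [← sum_subset (Icc_subset_Icc_right hN)]
  · refine sum_congr rfl fun i hi => ?_
    rw [min_eq_right_of_le_quotient hdiv hv (by omega) (mem_Icc.1 hi).2]
    linear_combination (i - 1) * hdiv
  · intro i hiN hiw
    have hwi : w < i := by simp only [mem_Icc] at hiN hiw; omega
    rw [min_eq_left_of_quotient_lt hdiv hv hvd hwi, sub_self, mul_zero]

end Division

theorem stmt_2_general (r s w v N : ℤ) (hs : r - 1 ≤ s)
    (hdiv : s - 1 = w * (r - 2) + v) (hv0 : 0 ≤ v) (hv1 : v ≤ r - 3)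
    (hN : w ≤ N) :
    ((∑ i ∈ Finset.Icc (1 : ℤ) N, (i - 1) * (s - min s (i * (r - 2) + 1)) : ℤ) : ℚ)
      = ((w : ℚ) * (w - 1) * (w - 2) / 6) * ((r : ℚ) - 2)
        + ((w : ℚ) * (w - 1) / 2) * (v : ℚ) := by
  have hw : 0 ≤ w := by nlinarith
  rw [sum_Icc_mul_sub_min_eq hdiv hv0 (by omega) hN, ← sum_Icc_one_sub_one_mul_sub_mul_add hw]
  push_cast
  rfl

/-- Let `r` and `s` be integers with `r ≥ 3` and `s ≥ r-1`, and write
`s - 1 = w*(r-2) + v` with `0 ≤ v ≤ r-3`. Then for every integer `N ≥ w`,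
`∑_{i=1}^{N} (i-1)*(s - min s (i*(r-2)+1)) = (w choose 3)*(r-2) + (w choose 2)*v`,
where `(w choose 2) = w*(w-1)/2` and `(w choose 3) = w*(w-1)*(w-2)/6`. -/
theorem stmt_2 (r s w v N : ℤ) (hr : 3 ≤ r) (hs : r - 1 ≤ s)
    (hdiv : s - 1 = w * (r - 2) + v) (hv0 : 0 ≤ v) (hv1 : v ≤ r - 3)
    (hN : w ≤ N) :
    ((∑ i ∈ Finset.Icc (1 : ℤ) N, (i - 1) * (s - min s (i * (r - 2) + 1)) : ℤ) : ℚ)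
      = ((w : ℚ) * (w - 1) * (w - 2) / 6) * ((r : ℚ) - 2)
        + ((w : ℚ) * (w - 1) / 2) * (v : ℚ) :=
  stmt_2_general r s w v N hs hdiv hv0 hv1 hN
end

section
/- Let $r$ and $s$ be integers with $r \geq 3$ and $s \geq r-1$, and write $s-1 = w(r-2) + v$ with integers $w, v$ satisfying $0 \leq v \leq r-3$. Then $\binom{w}{3}(r-2) + \binom{w}{2}v \leq \frac{s^3}{3(r-2)^2}$ (as rational numbers). -/
/-- Let `r` and `s` be integers with `r ≥ 3` and `s ≥ r-1`, and write
`s - 1 = w*(r-2) + v` with `0 ≤ v ≤ r-3`. Then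
`(w choose 3)*(r-2) + (w choose 2)*v ≤ s^3/(3*(r-2)^2)` as rational numbers,
where `(w choose 2) = w*(w-1)/2` and `(w choose 3) = w*(w-1)*(w-2)/6`. -/
theorem stmt_3 (r s w v : ℤ) (hr : 3 ≤ r) (hs : r - 1 ≤ s)
    (hdiv : s - 1 = w * (r - 2) + v) (hv0 : 0 ≤ v) (hv1 : v ≤ r - 3) :
    ((w : ℚ) * (w - 1) * (w - 2) / 6) * ((r : ℚ) - 2)
      + ((w : ℚ) * (w - 1) / 2) * (v : ℚ)
      ≤ (s : ℚ) ^ 3 / (3 * ((r : ℚ) - 2) ^ 2) := by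
  have hw : 1 ≤ w := by
    by_contra h
    push_neg at h
    have h1 : w ≤ 0 := by omega
    have : w * (r - 2) ≤ 0 := mul_nonpos_of_nonpos_of_nonneg h1 (by omega)
    omega
  -- cast to ℚ
  have hq1 : (1:ℚ) ≤ (r:ℚ) - 2 := by exact_mod_cast (by omega : (1:ℤ) ≤ r - 2)
  have hwq : (1:ℚ) ≤ (w:ℚ) := by exact_mod_cast hw
  have hv0q : (0:ℚ) ≤ (v:ℚ) := by exact_mod_cast hv0
  have hv1q : (v:ℚ) ≤ (r:ℚ) - 3 := by exact_mod_cast (by omega : v ≤ r - 3)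
  have hsq : (s:ℚ) = (w:ℚ) * ((r:ℚ) - 2) + (v:ℚ) + 1 := by
    have : (s:ℤ) = w * (r - 2) + v + 1 := by omega
    exact_mod_cast this
  have hpos : (0:ℚ) < 3 * ((r:ℚ) - 2) ^ 2 := by positivity
  rw [le_div_iff₀ hpos, hsq]
  nlinarith [sq_nonneg ((w:ℚ) * ((r:ℚ)-2) + (v:ℚ)), sq_nonneg ((w:ℚ)*((r:ℚ)-2) - (v:ℚ)),
    mul_nonneg (sub_nonneg.2 hwq) (sub_nonneg.2 hq1), sq_nonneg ((w:ℚ)-1),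
    mul_nonneg hv0q (sub_nonneg.2 hwq), mul_pos (lt_of_lt_of_le one_pos hwq) (lt_of_lt_of_le one_pos hq1),
    mul_nonneg (mul_nonneg hv0q hv0q) hv0q,
    mul_nonneg (mul_nonneg (sub_nonneg.2 hwq) (sub_nonneg.2 hq1)) hv0q,
    mul_nonneg (mul_nonneg (sub_nonneg.2 hwq) (sub_nonneg.2 hwq)) (sub_nonneg.2 hq1),
    mul_nonneg (mul_nonneg (sub_nonneg.2 hq1) (sub_nonneg.2 hq1)) (sub_nonneg.2 hwq)]
end

section
/- Let $r$ and $s$ be integers with $r \geq 3$ and $s \geq r-1$, and let $h : \{1,2,\dots\} \to \mathbb{Z}$ be a function satisfying $\min\{s,\, i(r-2)+1\} \leq h(i) \leq s$ for every $i \geq 1$. Then for every integer $N \geq 1$: $0 \leq \sum_{i=1}^{N}(i-1)\big(s - h(i)\big) \leq \frac{s^3}{3(r-2)^2}$ (as rational numbers). -/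
/-!
Put `Q = r - 2` and `T = s - 1`. The hypothesis on `h` says `s - h i ≤ max 0 (T - i Q)`, so only
the indices with `i Q ≤ T` contribute, and there are at most `T / Q` of them. For each of these,
AM-GM applied to the factors `(i - 1) Q` and `T - i Q`, whose sum is `T - Q`, bounds the summand by
`(T - Q)² / (4 Q)`. Hence the sum is at most `T (T - Q)² / (4 Q²) ≤ s³ / (3 Q²)`.
-/

open Finset

section
variable {K : Type*} [Field K] [LinearOrder K] [IsStrictOrderedRing K]

theorem sub_one_mul_sub_mul_le {Q : K} (hQ : 0 < Q) (x T : K) :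
    (x - 1) * (T - x * Q) ≤ (T - Q) ^ 2 / (4 * Q) := by
  rw [le_div_iff₀ (by positivity)]
  calc (x - 1) * (T - x * Q) * (4 * Q) = 4 * ((x - 1) * Q) * (T - x * Q) := by ring
    _ ≤ ((x - 1) * Q + (T - x * Q)) ^ 2 := four_mul_le_sq_add _ _
    _ = (T - Q) ^ 2 := by ring

theorem sum_Icc_sub_one_mul_le [FloorSemiring K] {Q T : K} (hQ : 0 < Q) (hT : 0 ≤ T)
    (d : ℕ → K) (N : ℕ) (hd : ∀ i ∈ Icc 1 N, d i ≤ max 0 (T - i * Q)) :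
    ∑ i ∈ Icc 1 N, ((i : K) - 1) * d i ≤ T * (T - Q) ^ 2 / (4 * Q ^ 2) := by
  set c := (T - Q) ^ 2 / (4 * Q)
  have hcard : #{i ∈ Icc 1 N | ((i : ℕ) : K) * Q ≤ T} ≤ ⌊T / Q⌋₊ := by
    calc #{i ∈ Icc 1 N | ((i : ℕ) : K) * Q ≤ T} ≤ #(Icc 1 ⌊T / Q⌋₊) := by
          refine card_le_card fun i hi => ?_
          simp only [mem_filter, mem_Icc] at hi ⊢
          exact ⟨hi.1.1, Nat.le_floor ((le_div_iff₀ hQ).2 hi.2)⟩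
      _ = ⌊T / Q⌋₊ := by simp
  calc ∑ i ∈ Icc 1 N, ((i : K) - 1) * d i ≤ ∑ i ∈ Icc 1 N with ((i : ℕ) : K) * Q ≤ T, c := by
        rw [sum_filter]
        refine sum_le_sum fun i hi => ?_
        have hi1 : (0 : K) ≤ i - 1 := sub_nonneg.2 (Nat.one_le_cast.2 (mem_Icc.1 hi).1)
        split_ifs with hiQ
        · calc ((i : K) - 1) * d i ≤ (i - 1) * (T - i * Q) := by
                gcongr
                simpa [max_eq_right (sub_nonneg.2 hiQ)] using hd i hi
            _ ≤ c := sub_one_mul_sub_mul_le hQ _ _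
        · have : d i ≤ 0 := by simpa [max_eq_left (by linarith : T - i * Q ≤ 0)] using hd i hi
          exact mul_nonpos_of_nonneg_of_nonpos hi1 this
    _ = #{i ∈ Icc 1 N | ((i : ℕ) : K) * Q ≤ T} * c := by simp
    _ ≤ T / Q * c := by
        gcongr
        exact (Nat.cast_le.2 hcard).trans (Nat.floor_le (by positivity))
    _ = T * (T - Q) ^ 2 / (4 * Q ^ 2) := by
        simp only [c]
        field_simp

theorem sub_one_mul_sq_div_le {Q s : K} (hQ : 0 < Q) (hQs : Q ≤ s - 1) :
    (s - 1) * (s - 1 - Q) ^ 2 / (4 * Q ^ 2) ≤ s ^ 3 / (3 * Q ^ 2) := by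
  have hcube : (s - 1) * (s - 1 - Q) ^ 2 ≤ s ^ 3 :=
    calc (s - 1) * (s - 1 - Q) ^ 2 ≤ s * s ^ 2 := by
          gcongr <;> linarith
      _ = s ^ 3 := by ring
  calc (s - 1) * (s - 1 - Q) ^ 2 / (4 * Q ^ 2) ≤ s ^ 3 / (4 * Q ^ 2) := by gcongr
    _ ≤ s ^ 3 / (3 * Q ^ 2) := by
        have : 0 < s := by linarith
        gcongr
        norm_num

end

theorem stmt_10_general (r s : ℤ) (hr : 3 ≤ r) (hs : r - 1 ≤ s) (h : ℕ → ℤ)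
    (hh : ∀ i : ℕ, 1 ≤ i → min s ((i : ℤ) * (r - 2) + 1) ≤ h i ∧ h i ≤ s)
    (N : ℕ) :
    0 ≤ ∑ i ∈ Finset.Icc 1 N, ((i : ℚ) - 1) * ((s : ℚ) - (h i : ℚ)) ∧
      ∑ i ∈ Finset.Icc 1 N, ((i : ℚ) - 1) * ((s : ℚ) - (h i : ℚ))
        ≤ (s : ℚ) ^ 3 / (3 * ((r : ℚ) - 2) ^ 2) := by
  have hQ : (0 : ℚ) < r - 2 := by
    have : (3 : ℚ) ≤ r := by exact_mod_cast hr
    linarith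
  have hQs : (r : ℚ) - 2 ≤ s - 1 := by
    have : ((r - 1 : ℤ) : ℚ) ≤ s := by exact_mod_cast hs
    push_cast at this
    linarith
  have hdefect : ∀ i ∈ Icc 1 N, (s : ℚ) - h i ≤ max (0 : ℚ) (s - 1 - i * (r - 2)) := by
    intro i hi
    have hmin := (hh i (mem_Icc.1 hi).1).1
    have : s - h i ≤ max 0 (s - 1 - i * (r - 2)) := by
      generalize (i : ℤ) * (r - 2) = x at hmin ⊢
      omega
    exact_mod_cast this
  refine ⟨sum_nonneg fun i hi => mul_nonneg ?_ ?_, ?_⟩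
  · exact sub_nonneg.2 (Nat.one_le_cast.2 (mem_Icc.1 hi).1)
  · exact sub_nonneg.2 (by exact_mod_cast (hh i (mem_Icc.1 hi).1).2)
  · exact (sum_Icc_sub_one_mul_le hQ (by linarith) _ N hdefect).trans
      (sub_one_mul_sq_div_le hQ hQs)

/-- Let `r` and `s` be integers with `r ≥ 3` and `s ≥ r-1`, and let `h` be an
integer-valued function on positive integers satisfying
`min s (i*(r-2)+1) ≤ h i ≤ s` for every `i ≥ 1`. Then for every integer `N ≥ 1`,
`0 ≤ ∑_{i=1}^{N} (i-1)*(s - h i) ≤ s^3/(3*(r-2)^2)` as rational numbers. -/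
theorem stmt_10 (r s : ℤ) (hr : 3 ≤ r) (hs : r - 1 ≤ s) (h : ℕ → ℤ)
    (hh : ∀ i : ℕ, 1 ≤ i → min s ((i : ℤ) * (r - 2) + 1) ≤ h i ∧ h i ≤ s)
    (N : ℕ) (hN : 1 ≤ N) :
    0 ≤ ∑ i ∈ Finset.Icc 1 N, ((i : ℚ) - 1) * ((s : ℚ) - (h i : ℚ)) ∧
      ∑ i ∈ Finset.Icc 1 N, ((i : ℚ) - 1) * ((s : ℚ) - (h i : ℚ))
        ≤ (s : ℚ) ^ 3 / (3 * ((r : ℚ) - 2) ^ 2) :=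
  stmt_10_general r s hr hs h hh N
end

section
/- Let $r$ and $s$ be integers with $r \geq 3$ and $s \geq r-1$. Write $s = w'(r-2) + v'$ with integers $w', v'$ satisfying $0 \leq v' \leq r-3$, and set $G' = \binom{w'}{2}(r-2) + w'v'$. Then for all real numbers $\pi \geq 0$ and $d \geq \frac{6(s+1)^3}{r-2}$ one has $\frac{d^2}{2(s+1)} + \frac{d}{2(s+1)}\big(2G' - 2 - (s+1)\big) + \frac{(s+1)^3}{r-2} \;<\; \frac{d^2}{2s} + \frac{d}{2s}\big(2\pi - 2 - s\big) + \frac{s^3}{r-2}$. -/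
/-- Let `r` and `s` be integers with `r ≥ 3` and `s ≥ r-1`. Write
`s = w'*(r-2) + v'` with `0 ≤ v' ≤ r-3`, and set
`G' = (w' choose 2)*(r-2) + w'*v'` where `(w' choose 2) = w'*(w'-1)/2`.
Then for all real numbers `π ≥ 0` and `d ≥ 6*(s+1)^3/(r-2)` one has
`d^2/(2*(s+1)) + d*(2*G' - 2 - (s+1))/(2*(s+1)) + (s+1)^3/(r-2)
  < d^2/(2*s) + d*(2*π - 2 - s)/(2*s) + s^3/(r-2)`. -/
theorem stmt_11 (r s w' v' : ℤ) (hr : 3 ≤ r) (hs : r - 1 ≤ s)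
    (hdiv : s = w' * (r - 2) + v') (hv0 : 0 ≤ v') (hv1 : v' ≤ r - 3)
    (G' : ℝ)
    (hG' : G' = ((w' : ℝ) * ((w' : ℝ) - 1) / 2) * ((r : ℝ) - 2) + (w' : ℝ) * (v' : ℝ))
    (π d : ℝ) (hπ : 0 ≤ π) (hd : 6 * ((s : ℝ) + 1) ^ 3 / ((r : ℝ) - 2) ≤ d) :
    d ^ 2 / (2 * ((s : ℝ) + 1))
        + d / (2 * ((s : ℝ) + 1)) * (2 * G' - 2 - ((s : ℝ) + 1))
        + ((s : ℝ) + 1) ^ 3 / ((r : ℝ) - 2)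
      < d ^ 2 / (2 * (s : ℝ)) + d / (2 * (s : ℝ)) * (2 * π - 2 - (s : ℝ))
        + (s : ℝ) ^ 3 / ((r : ℝ) - 2) := by
  have hr2 : (1:ℝ) ≤ (r:ℝ) - 2 := by
    have : (3:ℝ) ≤ (r:ℝ) := by exact_mod_cast hr
    linarith
  have hS2 : (2:ℝ) ≤ (s:ℝ) := by
    have h2 : (2:ℤ) ≤ s := by omega
    exact_mod_cast h2
  have htS : (r:ℝ) - 2 ≤ (s:ℝ) - 1 := by
    have h2 : (r:ℝ) - 1 ≤ (s:ℝ) := by exact_mod_cast hs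
    linarith
  -- w' is positive
  have hprodZ : 0 < w' * (r - 2) := by omega
  have hw : 0 < w' := by
    rcases mul_pos_iff.mp hprodZ with ⟨h, _⟩ | ⟨_, h⟩
    · exact h
    · omega
  have hwR : (0:ℝ) ≤ (w':ℝ) := by exact_mod_cast hw.le
  have hsr : (s:ℝ) = (w':ℝ) * ((r:ℝ) - 2) + (v':ℝ) := by exact_mod_cast hdiv
  have hvR : (0:ℝ) ≤ (v':ℝ) := by exact_mod_cast hv0
  have hGb : 2 * G' * ((r:ℝ) - 2) ≤ (s:ℝ) ^ 2 := by
    rw [hG', hsr]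
    nlinarith [mul_nonneg hwR (sq_nonneg ((r:ℝ) - 2)), sq_nonneg ((v':ℝ))]
  have ht0 : (0:ℝ) < (r:ℝ) - 2 := by linarith
  have hS0 : (0:ℝ) < (s:ℝ) := by linarith
  have hS1 : (0:ℝ) < (s:ℝ) + 1 := by linarith
  have hd0 : (0:ℝ) < d := lt_of_lt_of_le (by positivity) hd
  have hdt : 6 * ((s:ℝ) + 1) ^ 3 ≤ d * ((r:ℝ) - 2) := by
    rw [div_le_iff₀ ht0] at hd; linarith
  have hd1 : 6 * ((s:ℝ) + 1) ^ 2 ≤ d := by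
    have h1 : d * ((r:ℝ) - 2) ≤ d * (s:ℝ) := by
      apply mul_le_mul_of_nonneg_left (by linarith) hd0.le
    have h2 : 6 * ((s:ℝ) + 1) ^ 2 * (s:ℝ) ≤ d * (s:ℝ) := by nlinarith
    exact le_of_mul_le_mul_right h2 hS0
  have key : 0 < d ^ 2 * ((r:ℝ) - 2) + 2 * π * d * ((r:ℝ) - 2) * ((s:ℝ) + 1)
      - 2 * d * ((r:ℝ) - 2) - 2 * (s:ℝ) * G' * d * ((r:ℝ) - 2)
      - 2 * (s:ℝ) * ((s:ℝ) + 1) * (3 * (s:ℝ) ^ 2 + 3 * (s:ℝ) + 1) := by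
    nlinarith [mul_nonneg (mul_nonneg hπ hd0.le) (mul_pos ht0 hS1).le,
      mul_le_mul_of_nonneg_left hGb (mul_pos hS0 hd0).le,
      mul_le_mul_of_nonneg_left hdt hd0.le,
      mul_nonneg (sub_nonneg.mpr hd1) (by nlinarith : (0:ℝ) ≤ 6 * ((s:ℝ)+1)^3 - 2*((r:ℝ)-2) - (s:ℝ)^3),
      sq_nonneg ((s:ℝ) + 1), sq_nonneg d]
  rw [← sub_pos]
  have heq : d ^ 2 / (2 * (s:ℝ)) + d / (2 * (s:ℝ)) * (2 * π - 2 - (s:ℝ))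
        + (s:ℝ) ^ 3 / ((r:ℝ) - 2)
      - (d ^ 2 / (2 * ((s:ℝ) + 1))
        + d / (2 * ((s:ℝ) + 1)) * (2 * G' - 2 - ((s:ℝ) + 1))
        + ((s:ℝ) + 1) ^ 3 / ((r:ℝ) - 2))
      = (d ^ 2 * ((r:ℝ) - 2) + 2 * π * d * ((r:ℝ) - 2) * ((s:ℝ) + 1)
        - 2 * d * ((r:ℝ) - 2) - 2 * (s:ℝ) * G' * d * ((r:ℝ) - 2)
        - 2 * (s:ℝ) * ((s:ℝ) + 1) * (3 * (s:ℝ) ^ 2 + 3 * (s:ℝ) + 1))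
        / (2 * (s:ℝ) * ((s:ℝ) + 1) * ((r:ℝ) - 2)) := by
    field_simp
    ring
  rw [heq]
  exact div_pos key (by positivity)
end
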